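/- For every imaginary octonion q and all octonions p, r, x, one has p(q(q(rx))) = q²·(p(rx)), where q² is the real number −N(q). (In the paper's composition notation: (p∘q)∘(q∘r) = q² p∘r.) -/

import Mathlib

noncomputable section

abbrev H := Quaternion ℝ

/-- The octonions 𝕆, as the Cayley–Dickson double of the quaternions:
pairs (a,b) of quaternions. -/
def Oct : Type := H × H

namespace Oct

instance : AddCommGroup Oct := inferInstanceAs (AddCommGroup (H × H))
instance : Module ℝ Oct := inferInstanceAs (Module ℝ (H × H))

def mk' (a b : H) : Oct := (a, b)
def fst : Oct → H := Prod.fst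
def snd : Oct → H := Prod.snd

/-- Cayley–Dickson multiplication: (a,b)·(c,d) = (ac − conj(d)b, da + b·conj(c)). -/
instance : Mul Oct :=
  ⟨fun p q => mk' (p.fst * q.fst - star q.snd * p.snd) (q.snd * p.fst + p.snd * star q.fst)⟩

instance : One Oct := ⟨mk' 1 0⟩

/-- Octonionic conjugation: conj (a,b) = (conj a, −b). -/
def conj (p : Oct) : Oct := mk' (star p.fst) (-p.snd)

/-- The real part of an octonion, as a real scalar. -/
def re (p : Oct) : ℝ := (p.fst).re

/-- The bilinear form ⟨x,y⟩ = (x·conj(y) + y·conj(x))/2, a real scalar. -/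
def oinner (p q : Oct) : ℝ := re (p * conj q + q * conj p) / 2

/-- The norm N(x) = x·conj(x), a real scalar. -/
def N (p : Oct) : ℝ := re (p * conj p)

/-- An octonion is imaginary if conj x = −x. -/
def IsIm (p : Oct) : Prop := conj p = -p

/-- The embedding of the reals into the octonions. -/
def oR (r : ℝ) : Oct := mk' (algebraMap ℝ H r) 0

end Oct

open Oct

/-! The octonions are alternative, so `q (q y) = q² y`; an imaginary `q` squares to the real
number `-N q`, and real scalars commute past left multiplication by `p`. -/

namespace Oct

@[ext]
lemma ext {p q : Oct} (h₁ : p.fst = q.fst) (h₂ : p.snd = q.snd) : p = q := Prod.ext h₁ h₂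

@[simp] lemma fst_mul (p q : Oct) : (p * q).fst = p.fst * q.fst - star q.snd * p.snd := rfl
@[simp] lemma snd_mul (p q : Oct) : (p * q).snd = q.snd * p.fst + p.snd * star q.fst := rfl
@[simp] lemma fst_smul (s : ℝ) (p : Oct) : (s • p).fst = s • p.fst := rfl
@[simp] lemma snd_smul (s : ℝ) (p : Oct) : (s • p).snd = s • p.snd := rfl
@[simp] lemma fst_conj (p : Oct) : (conj p).fst = star p.fst := rfl
@[simp] lemma snd_conj (p : Oct) : (conj p).snd = -p.snd := rfl
@[simp] lemma fst_oR (s : ℝ) : (oR s).fst = algebraMap ℝ H s := rfl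
@[simp] lemma snd_oR (s : ℝ) : (oR s).snd = 0 := rfl

instance : SMulCommClass ℝ Oct Oct where
  smul_comm s p q := by ext : 1 <;> simp [smul_sub, smul_add]

lemma oR_mul (s : ℝ) (p : Oct) : oR s * p = s • p := by
  ext : 1 <;> simp [Algebra.smul_def, Quaternion.mul_coe_eq_smul]

open Quaternion in
lemma N_eq_normSq_add_normSq (p : Oct) : N p = normSq p.fst + normSq p.snd := by
  simp [N, re, self_mul_star, star_mul_self]

theorem left_alternative (q y : Oct) : q * (q * y) = q * q * y := by
  ext : 2 <;> simp <;> ring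

open Quaternion in
theorem mul_self_of_isIm {q : Oct} (hq : IsIm q) : q * q = oR (-N q) := by
  have ha : star q.fst = -q.fst := congrArg fst hq
  ext : 1
  · calc q.fst * q.fst - star q.snd * q.snd = -(q.fst * star q.fst) - star q.snd * q.snd := by
          rw [ha, mul_neg, neg_neg]
      _ = algebraMap ℝ H (-N q) := by
          rw [self_mul_star, star_mul_self, N_eq_normSq_add_normSq, algebraMap_def]; push_cast; abel
  · simp [ha]

end Oct

/-- For every imaginary octonion q and all octonions p, r, x:
p(q(q(rx))) = q²·(p(rx)), where q² is the real number −N(q).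
(In composition notation: (p∘q)∘(q∘r) = q² p∘r.) -/
theorem comp_pqqr (q : Oct) (hq : IsIm q) (p r x : Oct) :
    p * (q * (q * (r * x))) = (-(N q)) • (p * (r * x)) := by
  rw [left_alternative, mul_self_of_isIm hq, oR_mul, mul_smul_comm]
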